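/- Define f: ℚ⁺ → ℝ⁺ by f(p/q) = 1/q for p,q coprime positive integers, and h(x) = 1/x on ℝ⁺. Then β(f) = 2 (f has oscillation rank 2), while h ∘ f is not fragmented (β(h ∘ f) = ∞), even though h is continuous. -/

import Mathlib

open Set Filter Ordinal ENNReal

universe u v

section Defs

variable {X : Type u} {E : Type v}

/-- `f` restricted to `A` is `ε`-fragmented: every nonempty subset of `A` has a relatively
open nonempty piece on which the oscillation (diameter of the image) of `f` is at most `ε`. -/
def EpsFragOn [TopologicalSpace X] [PseudoEMetricSpace E] (f : X → E) (A : Set X)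
    (ε : ℝ≥0∞) : Prop :=
  ∀ F : Set X, F ⊆ A → F.Nonempty → ∃ V : Set X, IsOpen V ∧ (V ∩ F).Nonempty ∧
    EMetric.diam (f '' (V ∩ F)) ≤ ε

/-- The fragmentability index `frag f = inf {ε > 0 : f is ε-fragmented}` (with `inf ∅ = ∞`). -/
noncomputable def fragIdx [TopologicalSpace X] [PseudoEMetricSpace E] (f : X → E) : ℝ≥0∞ :=
  sInf {ε | 0 < ε ∧ EpsFragOn f Set.univ ε}

/-- A set `H` is resolvable: every nonempty `A ⊆ X` has a relatively open nonempty piece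
entirely inside `H` or entirely inside its complement. -/
def Resolvable [TopologicalSpace X] (H : Set X) : Prop :=
  ∀ A : Set X, A.Nonempty → ∃ U : Set X, IsOpen U ∧ (U ∩ A).Nonempty ∧
    (U ∩ A ⊆ H ∨ U ∩ A ⊆ Hᶜ)

/-- The σ-fragmentability index by resolvable sets. -/
noncomputable def sfragIdx [TopologicalSpace X] [PseudoEMetricSpace E] (f : X → E) : ℝ≥0∞ :=
  sInf {ε | 0 < ε ∧ ∃ H : ℕ → Set X, (∀ n, Resolvable (H n)) ∧ (⋃ n, H n) = Set.univ ∧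
    ∀ n, EpsFragOn f (H n) ε}

/-- `g` is constant on each set of some resolvable partition of `X`, i.e. on each difference
`U (γ+1) \ U γ` of an increasing transfinite sequence of open sets from `∅` to `X`,
continuous at limit ordinals. -/
def ConstOnResolvablePartition [TopologicalSpace X] (g : X → E) : Prop :=
  ∃ (κ : Ordinal.{u}) (U : Ordinal.{u} → Set X),
    (∀ α, IsOpen (U α)) ∧ (∀ α β : Ordinal, α ≤ β → U α ⊆ U β) ∧
    U 0 = ∅ ∧ U κ = Set.univ ∧
    (∀ γ, γ ≤ κ → Order.IsSuccLimit γ → U γ = ⋃ α < γ, U α) ∧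
    (∀ γ < κ, ∀ x ∈ U (γ + 1) \ U γ, ∀ y ∈ U (γ + 1) \ U γ, g x = g y)

/-- The transfinite derivation of open sets in the definition of the oscillation rank
`β(f, ε)`:  `U 0 = ∅`, `U (α+1) = U α ∪ {x ∉ U α : ∃ open V ∋ x, diam f (V \ U α) < ε}`,
and unions at limit ordinals. -/
noncomputable def oscSet [TopologicalSpace X] [PseudoEMetricSpace E] (f : X → E)
    (ε : ℝ≥0∞) (o : Ordinal.{u}) : Set X :=
  Ordinal.limitRecOn o ∅
    (fun _ U => U ∪ {x | x ∉ U ∧ ∃ V : Set X, IsOpen V ∧ x ∈ V ∧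
      EMetric.diam (f '' (V \ U)) < ε})
    (fun γ _ ih => ⋃ (β : Ordinal) (h : β < γ), ih β h)

/-- `f` has countable oscillation rank: `β(f) < ω₁`, i.e. for every `ε > 0` the derivation
reaches `X` at some countable ordinal. -/
def CountableOscRank [TopologicalSpace X] [PseudoEMetricSpace E] (f : X → E) : Prop :=
  ∀ ε : ℝ≥0∞, 0 < ε → ∃ α < ω₁, oscSet f ε α = Set.univ

/-- A transfinite sequence `(V α)_{α ≤ κ}` of open sets has property `*(f, ε)`. -/
def StarProp [TopologicalSpace X] [PseudoEMetricSpace E] (f : X → E) (ε : ℝ≥0∞)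
    (κ : Ordinal.{u}) (V : Ordinal.{u} → Set X) : Prop :=
  (∀ α, α ≤ κ → IsOpen (V α)) ∧ (∀ α β : Ordinal, α ≤ β → β ≤ κ → V α ⊆ V β) ∧
  V 0 = ∅ ∧ V κ = Set.univ ∧
  (∀ γ, γ ≤ κ → Order.IsSuccLimit γ → V γ = ⋃ α < γ, V α) ∧
  (∀ α < κ, ∀ x ∈ V (α + 1) \ V α, ∃ W : Set X, IsOpen W ∧ x ∈ W ∧
    EMetric.diam (f '' (W \ V α)) < ε)

/-- Uniform distance `d(f, g) = sup_x ρ(f x, g x)` (in `[0, ∞]`). -/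
noncomputable def unifDist [PseudoEMetricSpace E] (f g : X → E) : ℝ≥0∞ :=
  ⨆ x, edist (f x) (g x)

/-- Distance from `f` to the family of σ-fragmented mappings. -/
noncomputable def distToSFrag [TopologicalSpace X] [PseudoEMetricSpace E] (f : X → E) : ℝ≥0∞ :=
  ⨅ (g : {g : X → E // sfragIdx g = 0}), unifDist f g.1

end Defs

/-! Distinct rationals satisfy `|x - y| ≥ 1 / (den x * den y)`, so in a small punctured
neighbourhood of `x` every rational has denominator larger than any prescribed bound, while
every neighbourhood of `x` contains rationals of arbitrarily large denominator.
For `f = 1 / den` this means `f ≤ f x` near `x`, so the first derivation step of `β(f, ε)`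
removes every `x` with `f x < ε`; what is left has bounded denominators, hence is discrete,
and the second step removes it. For `ε = 1/2` the point `1` survives the first step,
since every neighbourhood of `1` meets points with `f ≤ 1/2`.
Finally `h ∘ f = den`, and every open set contains two points whose denominators differ
by at least `1`. -/

open Topology

namespace Rat

theorem inv_den_mul_den_le_dist {x y : ℚ} (h : x ≠ y) :
    ((x.den * y.den : ℕ) : ℝ)⁻¹ ≤ dist x y := by
  have hden : ((x - y).den : ℝ) ≤ (x.den * y.den : ℕ) := by
    exact_mod_cast Nat.le_of_dvd (by positivity) (Rat.sub_den_dvd x y)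
  have hnum : (1 : ℝ) ≤ |((x - y).num : ℝ)| := by
    exact_mod_cast Int.one_le_abs (Rat.num_ne_zero.mpr (sub_ne_zero.mpr h))
  have hpos : (0 : ℝ) < (x - y).den := by exact_mod_cast (x - y).den_pos
  calc ((x.den * y.den : ℕ) : ℝ)⁻¹ ≤ ((x - y).den : ℝ)⁻¹ := inv_anti₀ hpos hden
    _ ≤ |((x - y).num : ℝ)| / (x - y).den := by rw [inv_eq_one_div]; gcongr
    _ = dist x y := by
      rw [Rat.dist_eq, ← Rat.cast_sub, ← abs_of_pos hpos, ← abs_div, ← Rat.cast_natCast,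
        ← Rat.cast_intCast, ← Rat.cast_div, Rat.num_div_den]

theorem tendsto_den_nhdsNE (x : ℚ) : Tendsto Rat.den (𝓝[≠] x) atTop := by
  refine tendsto_atTop.mpr fun N => eventually_nhdsWithin_iff.mpr ?_
  refine Metric.eventually_nhds_iff.mpr ⟨((x.den * (N + 1) : ℕ) : ℝ)⁻¹, by positivity, ?_⟩
  intro y hy hyx
  by_contra! hlt
  have hsep := inv_den_mul_den_le_dist (Ne.symm hyx)
  have hle : ((x.den * (N + 1) : ℕ) : ℝ)⁻¹ ≤ ((x.den * y.den : ℕ) : ℝ)⁻¹ := by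
    gcongr
    omega
  rw [dist_comm] at hsep
  linarith

end Rat

local notation "ℚ⁺" => {q : ℚ // 0 < q}

namespace PosRat

theorem eventually_den_gt (x : ℚ⁺) (N : ℕ) : ∀ᶠ y in 𝓝 x, y ≠ x → N < y.1.den := by
  have h := eventually_nhdsWithin_iff.mp ((Rat.tendsto_den_nhdsNE x.1).eventually_gt_atTop N)
  exact (continuous_subtype_val.tendsto x).eventually h |>.mono
    fun y hy hyx => hy (Subtype.val_injective.ne hyx)

theorem exists_mem_le_den {x : ℚ⁺} {V : Set ℚ⁺} (hV : V ∈ 𝓝 x) (N : ℕ) :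
    ∃ y ∈ V, N ≤ y.1.den := by
  obtain ⟨W, hW, hWV⟩ := (mem_nhds_subtype _ _ _).mp hV
  have hden : ∀ᶠ y in 𝓝[>] x.1, N ≤ y.den :=
    ((Rat.tendsto_den_nhdsNE x.1).mono_left
      (nhdsWithin_mono _ fun _ hy => ne_of_gt hy)).eventually_ge_atTop N
  have hW' : ∀ᶠ y in 𝓝[>] x.1, y ∈ W := mem_nhdsWithin_of_mem_nhds hW
  obtain ⟨y, hyW, hyN, hxy⟩ := (hW'.and (hden.and self_mem_nhdsWithin)).exists
  exact ⟨⟨y, x.2.trans hxy⟩, hWV hyW, hyN⟩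

end PosRat

section OscSet

variable {X : Type u} {E : Type v} [TopologicalSpace X] [PseudoEMetricSpace E]

theorem oscSet_zero (f : X → E) (ε : ℝ≥0∞) : oscSet f ε 0 = ∅ :=
  Ordinal.limitRecOn_zero _ _ _

theorem mem_oscSet_succ {f : X → E} {ε : ℝ≥0∞} {o : Ordinal.{u}} {x : X} :
    x ∈ oscSet f ε (o + 1) ↔ x ∈ oscSet f ε o ∨
      ∃ V : Set X, IsOpen V ∧ x ∈ V ∧ Metric.ediam (f '' (V \ oscSet f ε o)) < ε := by
  rw [oscSet, Ordinal.limitRecOn_add_one, ← oscSet]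
  simp only [Set.mem_union, Set.mem_ofPred_eq]
  tauto

theorem mem_oscSet_one {f : X → E} {ε : ℝ≥0∞} {x : X} :
    x ∈ oscSet f ε 1 ↔ ∃ V : Set X, IsOpen V ∧ x ∈ V ∧ Metric.ediam (f '' V) < ε := by
  rw [← zero_add 1, mem_oscSet_succ, oscSet_zero]
  simp

end OscSet

noncomputable def invDen (x : ℚ⁺) : ℝ := 1 / x.1.den

theorem mem_oscSet_one_invDen {ε : ℝ≥0∞} {x : ℚ⁺} (h : (x.1.den : ℝ≥0∞)⁻¹ < ε) :
    x ∈ oscSet invDen ε 1 := by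
  obtain ⟨V, hV, hVo, hxV⟩ := eventually_nhds_iff.mp (PosRat.eventually_den_gt x x.1.den)
  refine mem_oscSet_one.mpr ⟨V, hVo, hxV, lt_of_le_of_lt ?_ h⟩
  have hx : (0 : ℝ) < x.1.den := by exact_mod_cast x.1.den_pos
  have himage : invDen '' V ⊆ Set.Icc 0 (x.1.den : ℝ)⁻¹ := by
    rintro _ ⟨y, hyV, rfl⟩
    have hxy : x.1.den ≤ y.1.den := by
      rcases eq_or_ne y x with rfl | hyx
      · rfl
      · exact (hV y hyV hyx).le
    refine ⟨by unfold invDen; positivity, ?_⟩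
    rw [invDen, one_div]
    gcongr
  calc Metric.ediam (invDen '' V) ≤ Metric.ediam (Set.Icc 0 (x.1.den : ℝ)⁻¹) :=
        Metric.ediam_mono himage
    _ = (x.1.den : ℝ≥0∞)⁻¹ := by
      rw [Real.ediam_Icc, sub_zero (G := ℝ), ENNReal.ofReal_inv_of_pos hx, ENNReal.ofReal_natCast]

theorem oscSet_invDen_two {ε : ℝ≥0∞} (hε : 0 < ε) : oscSet invDen ε 2 = Set.univ := by
  obtain ⟨M, hM⟩ := ENNReal.exists_inv_nat_lt hε.ne'
  have hlarge : ∀ y : ℚ⁺, M < y.1.den → y ∈ oscSet invDen ε 1 := fun y hy =>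
    mem_oscSet_one_invDen ((ENNReal.inv_le_inv.mpr (by exact_mod_cast hy.le)).trans_lt hM)
  refine Set.eq_univ_of_forall fun x => ?_
  rw [← one_add_one_eq_two, mem_oscSet_succ]
  obtain ⟨V, hV, hVo, hxV⟩ := eventually_nhds_iff.mp (PosRat.eventually_den_gt x M)
  have hsub : V \ oscSet invDen ε 1 ⊆ {x} := fun y ⟨hyV, hy1⟩ =>
    by_contra fun hyx => hy1 (hlarge y (hV y hyV hyx))
  refine Or.inr ⟨V, hVo, hxV, ?_⟩
  rwa [Metric.ediam_subsingleton ((Set.subsingleton_singleton.anti hsub).image _)]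

theorem one_notMem_oscSet_invDen_one :
    (⟨1, one_pos⟩ : ℚ⁺) ∉ oscSet invDen (ENNReal.ofReal (1 / 2)) 1 := by
  intro h
  obtain ⟨V, hVo, hxV, hdiam⟩ := mem_oscSet_one.mp h
  obtain ⟨y, hyV, hy⟩ := PosRat.exists_mem_le_den (hVo.mem_nhds hxV) 2
  have hfy : invDen y ≤ 1 / 2 := by
    rw [invDen]
    gcongr
    exact_mod_cast hy
  have hfy0 : 0 ≤ invDen y := by unfold invDen; positivity
  have hedist : ENNReal.ofReal (1 / 2) ≤ edist (invDen y) (invDen ⟨1, one_pos⟩) := by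
    rw [edist_dist, Real.dist_eq]
    refine ENNReal.ofReal_le_ofReal (le_abs.mpr (Or.inr ?_))
    simp only [invDen, Rat.den_one, Nat.cast_one] at hfy ⊢
    linarith
  exact hdiam.not_ge (hedist.trans
    (Metric.edist_le_ediam_of_mem (Set.mem_image_of_mem _ hyV) (Set.mem_image_of_mem _ hxV)))

theorem one_le_fragIdx_den : 1 ≤ fragIdx (fun x : ℚ⁺ => (x.1.den : ℝ)) := by
  refine le_sInf ?_
  rintro ε ⟨-, hε⟩
  obtain ⟨V, hVo, ⟨x, hxV, -⟩, hdiam⟩ :=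
    hε Set.univ subset_rfl ⟨⟨1, one_pos⟩, Set.mem_univ _⟩
  obtain ⟨y, hyV, hy⟩ := PosRat.exists_mem_le_den (hVo.mem_nhds hxV) (x.1.den + 1)
  have hedist : 1 ≤ edist (y.1.den : ℝ) (x.1.den : ℝ) := by
    rw [edist_dist, Real.dist_eq, ← ENNReal.ofReal_one]
    refine ENNReal.ofReal_le_ofReal (le_abs.mpr (Or.inl ?_))
    have : (x.1.den : ℝ) + 1 ≤ y.1.den := by exact_mod_cast hy
    linarith
  refine hedist.trans (le_trans ?_ hdiam)
  exact Metric.edist_le_ediam_of_mem (Set.mem_image_of_mem _ ⟨hyV, Set.mem_univ _⟩)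
    (Set.mem_image_of_mem _ ⟨hxV, Set.mem_univ _⟩)

/-- `f(p/q) = 1/q` on positive rationals has oscillation rank exactly `2`,
but its composition with the continuous map `h(x) = 1/x` is not fragmented. -/
theorem stmt_13 :
    ContinuousOn (fun y : ℝ => 1 / y) {y : ℝ | 0 < y} ∧
    (∀ ε : ℝ≥0∞, 0 < ε → ∃ α ≤ (2 : Ordinal),
      oscSet (fun x : {q : ℚ // 0 < q} => 1 / (x.1.den : ℝ)) ε α = Set.univ) ∧
    (∃ ε : ℝ≥0∞, 0 < ε ∧ ∀ α < (2 : Ordinal),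
      oscSet (fun x : {q : ℚ // 0 < q} => 1 / (x.1.den : ℝ)) ε α ≠ Set.univ) ∧
    ¬ fragIdx ((fun y : ℝ => 1 / y) ∘ (fun x : {q : ℚ // 0 < q} => 1 / (x.1.den : ℝ))) = 0 := by
  refine ⟨continuousOn_const.div continuousOn_id fun y hy => hy.ne',
    fun ε hε => ⟨2, le_rfl, oscSet_invDen_two hε⟩,
    ⟨ENNReal.ofReal (1 / 2), by simp, fun α hα huniv => ?_⟩, fun h0 => ?_⟩
  · rcases Order.le_one_iff.mp (Order.lt_two_iff.mp hα) with rfl | rfl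
    · simpa [oscSet_zero] using huniv.symm
    · exact one_notMem_oscSet_invDen_one (huniv ▸ Set.mem_univ _)
  · have hcomp : (fun y : ℝ => 1 / y) ∘ (fun x : ℚ⁺ => 1 / (x.1.den : ℝ)) =
        fun x => (x.1.den : ℝ) := funext fun _ => one_div_one_div _
    rw [hcomp] at h0
    simpa [h0] using one_le_fragIdx_den
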